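/- In the colored Merge formalism for the theta bud system B_Θ, Internal Merge can only move to non-theta positions: colored Internal Merge necessarily has the form M^{c'}_{T_v, T/T_v} ∘ M^{θ_0}_{T_v, (1,θ_0)}, so that in the resulting structure M^{c'}(T_v, T/T_v) the root of the moved copy of the accessible term T_v is colored by the non-theta marker θ_0; this is a consequence of the coloring rules of B_Θ, since the formal unit 1 carries only the color (1,θ_0) and the only generators with a (1,θ_0)-colored leaf have output color θ_0. -/

import Mathlib

/-! ## Colored trees and bud-style generation for theta theory -/

/-- Giver (`↑`) / receiver (`↓`) marking of theta roles. -/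
inductive Mark where
  | up : Mark
  | down : Mark
deriving DecidableEq

/-- A tuple (grid) of marked theta roles; the empty grid is the non-theta marker `θ₀`. -/
abbrev Grid (ρ : Type) := List (ρ × Mark)

/-- The color set `Θ = Θ₀ ⊔ (SO₀ × Θ₀) ⊔ {(1,θ₀)}` for the theta bud system:
`pos g` is a nonterminal color (an element of `Θ₀`, with `pos [] = θ₀` the
non-theta marker), `lex α g` is a terminal color (a lexical item decorated by a
grid), and `one` is the terminal color `(1, θ₀)` of the formal empty tree. -/
inductive ThC (ρ SO : Type) where
  | pos : Grid ρ → ThC ρ SO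
  | lex : SO → Grid ρ → ThC ρ SO
  | one : ThC ρ SO
deriving DecidableEq

/-- Vertex-colored binary rooted trees.  We use the planar representative
determined by the head function (harmonic head-final embedding), so the head
child of every internal vertex is the *right* child. -/
inductive CTree (Θ : Type) where
  | leaf : Θ → CTree Θ
  | node : Θ → CTree Θ → CTree Θ → CTree Θ
deriving DecidableEq

namespace CTree

variable {Θ : Type}

/-- The color of the root vertex. -/
def rootColor : CTree Θ → Θ
  | leaf c => c
  | node c _ _ => c

/-- The multiset of leaf colors (the input colors `c̄`). -/
def leafMS : CTree Θ → Multiset Θ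
  | leaf c => {c}
  | node _ l r => leafMS l + leafMS r

/-- The multiset of all vertex colors. -/
def vertexMS : CTree Θ → Multiset Θ
  | leaf c => {c}
  | node c l r => c ::ₘ (vertexMS l + vertexMS r)

/-- The multiset of colors of all vertices strictly below the root. -/
def belowRootMS : CTree Θ → Multiset Θ
  | leaf _ => 0
  | node _ l r => vertexMS l + vertexMS r

/-- Number of leaves `#L(T)`. -/
def numLeaves (t : CTree Θ) : ℕ := Multiset.card (leafMS t)

/-- The color of the head leaf (obtained by following the head function;
with our convention, the rightmost leaf). -/
def headLeafColor : CTree Θ → Θ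
  | leaf c => c
  | node _ _ r => headLeafColor r

/-- The multiset of colors of the leaves other than the head leaf. -/
def nonHeadLeafMS : CTree Θ → Multiset Θ
  | leaf _ => 0
  | node _ l r => leafMS l + nonHeadLeafMS r

/-- Replace the color of the root vertex. -/
def replaceRoot : CTree Θ → Θ → CTree Θ
  | leaf _, c => leaf c
  | node _ l r, c => node c l r

end CTree

/-- One derivation step: expand one leaf, whose color matches the output color of
a rule `r ∈ R`, into that rule (an operad insertion of a generator). -/
inductive ExpandLeaf {Θ : Type} (R : Set (CTree Θ)) : CTree Θ → CTree Θ → Prop where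
  | here {r : CTree Θ} (c : Θ) : r ∈ R → CTree.rootColor r = c →
      ExpandLeaf R (CTree.leaf c) r
  | left {l l' : CTree Θ} (c : Θ) (r : CTree Θ) : ExpandLeaf R l l' →
      ExpandLeaf R (CTree.node c l r) (CTree.node c l' r)
  | right {r r' : CTree Θ} (c : Θ) (l : CTree Θ) : ExpandLeaf R r r' →
      ExpandLeaf R (CTree.node c l r) (CTree.node c l r')

/-- Derivability in a bud generating system: a finite sequence of insertions of
rules of `R`. -/
def TDerives {Θ : Type} (R : Set (CTree Θ)) : CTree Θ → CTree Θ → Prop :=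
  Relation.ReflTransGen (ExpandLeaf R)

/-- The language of a bud generating system: everything derivable from a colored
unit `1_c` with `c` initial, all of whose input (leaf) colors are terminal. -/
def TLang {Θ : Type} (R : Set (CTree Θ)) (Init Term : Set Θ) : Set (CTree Θ) :=
  { t | TDerives R (CTree.leaf (CTree.rootColor t)) t ∧
        CTree.rootColor t ∈ Init ∧ ∀ c ∈ CTree.leafMS t, c ∈ Term }

section Theta

variable {ρ SO : Type}

/-- Strict comparison induced by the preorder on theta roles. -/
def ThLT (le : ρ → ρ → Prop) (a b : ρ) : Prop := le a b ∧ ¬ le b a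

/-- A theta hierarchy `θ̄ = (θ_E, θ_{I,1} > θ_{I,2} > … )`, of total length at
most `n_max`. -/
def IsHier (le : ρ → ρ → Prop) (nmax : ℕ) (_θE : ρ) (θI : List ρ) : Prop :=
  List.Chain' (fun a b => ThLT le b a) θI ∧ θI.length + 1 ≤ nmax

/-- The partial tuple `θ̄ₖ^↑ = (θ_E^↑, θ_{I,1}^↑, …, θ_{I,k}^↑)`. -/
def upTo (θE : ρ) (θI : List ρ) (k : ℕ) : Grid ρ :=
  (θE, Mark.up) :: (θI.take k).map (fun θ => (θ, Mark.up))

/-- The full tuple `θ̄^↑`. -/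
def fullUp (θE : ρ) (θI : List ρ) : Grid ρ :=
  (θE, Mark.up) :: θI.map (fun θ => (θ, Mark.up))

/-- The non-theta marker `θ₀` (the empty grid), as a nonterminal color. -/
def theta0 : ThC ρ SO := ThC.pos []

/-- `Deco g c`: the color `c` carries the grid `g`, either as the nonterminal
color `g` itself or as a terminal color `(α, g)` with a lexical item `α`. -/
def Deco (g : Grid ρ) (c : ThC ρ SO) : Prop :=
  c = ThC.pos g ∨ ∃ α : SO, c = ThC.lex α g

/-- Initial (nonterminal) colors: `I_Θ = Θ₀`. -/
def IsInitC (nmax : ℕ) (c : ThC ρ SO) : Prop :=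
  ∃ g : Grid ρ, c = ThC.pos g ∧ g.length ≤ nmax

/-- Terminal colors: `T_Θ = (SO₀ × Θ₀) ⊔ {(1,θ₀)}`. -/
def IsTermC (nmax : ℕ) (c : ThC ρ SO) : Prop :=
  (∃ (α : SO) (g : Grid ρ), c = ThC.lex α g ∧ g.length ≤ nmax) ∨ c = ThC.one

/-- The grid carried by a color. -/
def gridOf : ThC ρ SO → Grid ρ
  | ThC.pos g => g
  | ThC.lex _ g => g
  | ThC.one => []

/-- The generators of types (1) and (2) of the complete theta bud system `R_Θ`,
as triples (output color, head-child color, other-child color): the cherry-tree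
theta rules and their terminal-decorated versions. -/
inductive RTh12 (le : ρ → ρ → Prop) (nmax : ℕ) : ThC ρ SO → ThC ρ SO → ThC ρ SO → Prop where
  | ext (c : ThC ρ SO) (θE : ρ) (hc oc : ThC ρ SO) :
      IsInitC nmax c → IsHier le nmax θE [] →
      Deco [(θE, Mark.up)] hc → Deco [(θE, Mark.down)] oc →
      RTh12 le nmax c hc oc
  | internal (θE : ρ) (θI : List ρ) (k : ℕ) (θk : ρ) (hc oc : ThC ρ SO) :
      IsHier le nmax θE θI → θI[k]? = some θk →
      Deco (upTo θE θI (k + 1)) hc → Deco [(θk, Mark.down)] oc →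
      RTh12 le nmax (ThC.pos (upTo θE θI k)) hc oc

/-- The generators of types (3) and (4) of `R_Θ`: the non-theta adjunction rule
`(c; c, θ₀)` and the rules `(θ₀; c', (1,θ₀))`, `(θ₀; (α,c'), (1,θ₀))`. -/
inductive RThX (nmax : ℕ) : ThC ρ SO → ThC ρ SO → ThC ρ SO → Prop where
  | adjoin (c : ThC ρ SO) : IsInitC nmax c → RThX nmax c c (ThC.pos [])
  | im (g : Grid ρ) (hc : ThC ρ SO) : g.length ≤ nmax → Deco g hc →
      RThX nmax (ThC.pos []) hc ThC.one

/-- The full set of coloring rules `R_Θ` of the complete theta bud system. -/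
def RTh (le : ρ → ρ → Prop) (nmax : ℕ) (c hc oc : ThC ρ SO) : Prop :=
  RTh12 le nmax c hc oc ∨ RThX nmax c hc oc

/-- Cherry trees associated to a family of rule triples (head child on the
right, by our planar convention). -/
def ruleSet (P : ThC ρ SO → ThC ρ SO → ThC ρ SO → Prop) : Set (CTree (ThC ρ SO)) :=
  { t | ∃ c hc oc, P c hc oc ∧ t = CTree.node c (CTree.leaf oc) (CTree.leaf hc) }

/-- The language `L(B_Θ)` of the complete theta bud system (the "unbalanced
theta structures"). -/
def LTheta (le : ρ → ρ → Prop) (nmax : ℕ) : Set (CTree (ThC ρ SO)) :=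
  TLang (ruleSet (RTh le nmax)) { c | IsInitC nmax c } { c | IsTermC nmax c }

/-- Initial colors of the bare theta bud system: `I_{Θ,b} = Θ_b = ⊔_{n=1}^{n_max} ϑⁿ`. -/
def BareInitC (nmax : ℕ) (c : ThC ρ SO) : Prop :=
  ∃ g : Grid ρ, c = ThC.pos g ∧ 1 ≤ g.length ∧ g.length ≤ nmax

/-- Terminal colors of the bare theta bud system: `T_{Θ,b} = SO₀ × Θ_b`. -/
def BareTermC (nmax : ℕ) (c : ThC ρ SO) : Prop :=
  ∃ (α : SO) (g : Grid ρ), c = ThC.lex α g ∧ 1 ≤ g.length ∧ g.length ≤ nmax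

/-- The spine of a comb generator of the bare theta bud system: internal vertices
colored by the partial tuples `θ̄ₖ^↑`, with the `↓`-colored leaves on the
non-head side and the head leaf (carrying `θ̄^↑`) at the bottom. -/
def combFrom (θE : ρ) (θI : List ρ) (hd : ThC ρ SO) :
    List (ℕ × ThC ρ SO) → CTree (ThC ρ SO)
  | [] => CTree.leaf hd
  | (k, oc) :: rest =>
      CTree.node (ThC.pos (upTo θE θI k)) (CTree.leaf oc) (combFrom θE θI hd rest)

/-- A comb generator of the bare theta bud system: root color `c`, top non-head
leaf receiving `θ_E^↓`, and the spine of internal theta roles. -/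
def comb (c ocE : ThC ρ SO) (θE : ρ) (θI : List ρ) (hd : ThC ρ SO)
    (dl : List (ThC ρ SO)) : CTree (ThC ρ SO) :=
  CTree.node c (CTree.leaf ocE) (combFrom θE θI hd ((List.range dl.length).zip dl))

/-- The generating set `R_b` of the bare theta bud system: the comb trees with
an input theta-color grid at the leaves (head leaf carrying `θ̄^↑`), together
with their terminal-decorated versions. -/
def RBareSet (le : ρ → ρ → Prop) (nmax : ℕ) : Set (CTree (ThC ρ SO)) :=
  { t | ∃ (c ocE : ThC ρ SO) (θE : ρ) (θI : List ρ) (hd : ThC ρ SO)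
          (dl : List (ThC ρ SO)),
      IsHier le nmax θE θI ∧
      (∃ g : Grid ρ, c = ThC.pos g ∧ 1 ≤ g.length ∧ g.length ≤ nmax) ∧
      Deco [(θE, Mark.down)] ocE ∧ Deco (fullUp θE θI) hd ∧
      List.Forall₂ (fun (θ : ρ) (oc : ThC ρ SO) => Deco [(θ, Mark.down)] oc) θI dl ∧
      t = comb c ocE θE θI hd dl }

/-- The language `L(B_{Θ,b})` of the bare theta bud system (the "bare theta
structures"). -/
def LBare (le : ρ → ρ → Prop) (nmax : ℕ) : Set (CTree (ThC ρ SO)) :=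
  TLang (RBareSet le nmax) { c | BareInitC nmax c } { c | BareTermC nmax c }

/-- The theta criterion for an element `(c, T, c̄)`: the head leaf carries a
tuple in `ϑᵏ`, `k = #L(T) − 1`, consisting only of `↑`-marked roles; every other
leaf carries a single `↓`-marked role; and every `θ^↓` occurring among the input
colors is matched by a component `θ^↑` of the tuple at the head leaf. -/
def ThetaCrit (t : CTree (ThC ρ SO)) : Prop :=
  (CTree.headLeafColor t ≠ ThC.one ∧
    (gridOf (CTree.headLeafColor t)).length = CTree.numLeaves t - 1 ∧
    ∀ p ∈ gridOf (CTree.headLeafColor t), p.2 = Mark.up) ∧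
  (∀ c ∈ CTree.nonHeadLeafMS t, ∃ θ : ρ, gridOf c = [(θ, Mark.down)]) ∧
  (∀ θ : ρ, (∃ c ∈ CTree.leafMS t, (θ, Mark.down) ∈ gridOf c) →
      (θ, Mark.up) ∈ gridOf (CTree.headLeafColor t))

/-- Whether a color is a non-theta marking (`θ₀`, `(α, θ₀)` or `(1, θ₀)`). -/
def isTheta0 : ThC ρ SO → Bool
  | ThC.pos [] => true
  | ThC.lex _ [] => true
  | ThC.one => true
  | _ => false

/-- The deletion quotient `T /ᵈ π_{C₀}(T)` along the admissible cut `C₀` that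
cuts, on each root-to-leaf path, the first edge whose lower vertex is colored
`θ₀`: cut-off subtrees are removed and non-branching vertices are contracted. -/
def delQuot : CTree (ThC ρ SO) → CTree (ThC ρ SO)
  | CTree.leaf c => CTree.leaf c
  | CTree.node c l r =>
    if isTheta0 (CTree.rootColor l) then
      (if isTheta0 (CTree.rootColor r) then CTree.leaf c else delQuot r)
    else if isTheta0 (CTree.rootColor r) then delQuot l
    else CTree.node c (delQuot l) (delQuot r)

/-- The forest `π_{C₀}(T)` of subtrees cut off by the admissible cut `C₀`. -/
def cutOff : CTree (ThC ρ SO) → List (CTree (ThC ρ SO))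
  | CTree.leaf _ => []
  | CTree.node _ l r =>
    if isTheta0 (CTree.rootColor l) then
      (if isTheta0 (CTree.rootColor r) then [l, r] else l :: cutOff r)
    else if isTheta0 (CTree.rootColor r) then r :: cutOff l
    else cutOff l ++ cutOff r

end Theta

/-- The subtree at a given position (a path of left/right choices; `true` =
head/right).  An edge of the tree is identified with the (nonempty) position of
its lower vertex. -/
def subtreeAt {Θ : Type} : CTree Θ → List Bool → Option (CTree Θ)
  | t, [] => some t
  | CTree.leaf _, _ :: _ => none
  | CTree.node _ l r, b :: p => subtreeAt (if b then r else l) p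

/-- An admissible cut: a set of edges (identified by the positions of their lower
vertices) no two of which lie on a common path from the root to a leaf. -/
def IsAdmissibleCut {Θ : Type} (t : CTree Θ) (C : Set (List Bool)) : Prop :=
  (∀ p ∈ C, p ≠ [] ∧ (subtreeAt t p).isSome = true) ∧
  ∀ p ∈ C, ∀ q ∈ C, p ≠ q → ¬ p <+: q

section Theta2

variable {ρ SO : Type}

/-- The lower vertex of the edge at position `p` is colored `θ₀`. -/
def theta0At (t : CTree (ThC ρ SO)) (p : List Bool) : Prop :=
  ∃ s, subtreeAt t p = some s ∧ isTheta0 (CTree.rootColor s) = true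

/-- The cut `C₀`: on each oriented path from the root to a leaf, cut the first
edge whose lower vertex is colored `θ₀` (if any). -/
def C0Set (t : CTree (ThC ρ SO)) : Set (List Bool) :=
  { p | p ≠ [] ∧ theta0At t p ∧
        ∀ q, q ≠ [] → q <+: p → q ≠ p → ¬ theta0At t q }

/-- Grafting (operad insertion) of `t'` at the leaf of `t` in position `p`;
defined exactly when the leaf color matches the root color of `t'`. -/
def graftAt {Θ : Type} [DecidableEq Θ] : CTree Θ → List Bool → CTree Θ → Option (CTree Θ)
  | CTree.leaf c, [], t' => if CTree.rootColor t' = c then some t' else none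
  | CTree.node _ _ _, [], _ => none
  | CTree.leaf _, _ :: _, _ => none
  | CTree.node c l r, b :: p, t' =>
      if b then (graftAt r p t').map (fun r' => CTree.node c l r')
      else (graftAt l p t').map (fun l' => CTree.node c l' r)

/-- The position in the deletion quotient `Π₀(T)` corresponding to a surviving
position of `T` (contracted vertices drop out of the path). -/
def quotPath : CTree (ThC ρ SO) → List Bool → List Bool
  | CTree.leaf _, _ => []
  | CTree.node _ _ _, [] => []
  | CTree.node _ l r, b :: p =>
    if isTheta0 (CTree.rootColor l) then
      (if isTheta0 (CTree.rootColor r) then [] else quotPath r p)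
    else if isTheta0 (CTree.rootColor r) then quotPath l p
    else b :: quotPath (if b then r else l) p

/-- `TildeComp t u`: `u` is one of the quotient trees `Tᵢ /ᵈ π_{C₀,ᵢ}(Tᵢ)`
produced by the recursive decomposition `Π̃₀` of `t` (the repeated application
of the cut `C₀` to the components of each successive cut-off forest; the
left-over isolated `θ₀`-marked leaves are collected separately). -/
inductive TildeComp : CTree (ThC ρ SO) → CTree (ThC ρ SO) → Prop where
  | here (t : CTree (ThC ρ SO)) : TildeComp t (delQuot t)
  | deeper {t u : CTree (ThC ρ SO)} (s : CTree (ThC ρ SO)) :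
      s ∈ cutOff t → (∀ c, s ≠ CTree.leaf c) → TildeComp s u → TildeComp t u

end Theta2

/-- A workspace: a disjoint union (multiset) of colored syntactic objects. -/
abbrev Workspace (Θ : Type) := Multiset (CTree Θ)

/-- `Extract t s t'`: `s` is an accessible term (a full subtree other than the
root) of `t`, and `t'` is the contraction quotient `t / s`, in which `s` is
contracted to a leaf keeping its root color (the trace of movement keeps the
coloring of the root of the extracted term). -/
inductive Extract {Θ : Type} : CTree Θ → CTree Θ → CTree Θ → Prop where
  | hereL (c : Θ) (l r : CTree Θ) :
      Extract (CTree.node c l r) l (CTree.node c (CTree.leaf (CTree.rootColor l)) r)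
  | hereR (c : Θ) (l r : CTree Θ) :
      Extract (CTree.node c l r) r (CTree.node c l (CTree.leaf (CTree.rootColor r)))
  | inL {l s l' : CTree Θ} (c : Θ) (r : CTree Θ) : Extract l s l' →
      Extract (CTree.node c l r) s (CTree.node c l' r)
  | inR {r s r' : CTree Θ} (c : Θ) (l : CTree Θ) : Extract r s r' →
      Extract (CTree.node c l r) s (CTree.node c l r')

/-- Extraction of `S` from a workspace, as in the left channel of a coproduct
term `δ_{S,S'} ∘ Δ`: either `S` is a full component (whose quotient is the unit
and disappears from the right channel), or `S` is a proper accessible term of a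
component, whose quotient remains in the workspace. -/
inductive WExtract {Θ : Type} [DecidableEq Θ] : Workspace Θ → CTree Θ → Workspace Θ → Prop where
  | full {F : Workspace Θ} {t : CTree Θ} : t ∈ F → WExtract F t (F.erase t)
  | inner {F : Workspace Θ} {t s t' : CTree Θ} : t ∈ F → Extract t s t' →
      WExtract F s (t' ::ₘ F.erase t)

section Theta3

variable {ρ SO : Type} [DecidableEq ρ] [DecidableEq SO]

/-- The colored Merge `M^c_{S,S'} = ⊔ ∘ (B^c ⊗ id) ∘ δ^c_{{c_S,c_{S'}}} ∘ δ_{S,S'} ∘ Δ`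
as a relation on workspaces: `G` is a term of `M^c_{S,S'}(F)`.  The projection
`δ^c` is nonzero exactly when the cherry with root color `c` and the two root
colors is a generator of `R_Θ` (in one of its two orientations). -/
def CMerge (le : ρ → ρ → Prop) (nmax : ℕ) (c : ThC ρ SO)
    (S S' : CTree (ThC ρ SO)) (F G : Workspace (ThC ρ SO)) : Prop :=
  ∃ F₁ F₂ : Workspace (ThC ρ SO), WExtract F S F₁ ∧ WExtract F₁ S' F₂ ∧
    ((RTh le nmax c (CTree.rootColor S) (CTree.rootColor S') ∧
        G = (CTree.node c S' S) ::ₘ F₂) ∨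
     (RTh le nmax c (CTree.rootColor S') (CTree.rootColor S) ∧
        G = (CTree.node c S S') ::ₘ F₂))

/-- Structures built by repeated application of colored External Merge, starting
from generators of `R_Θ` with terminal colors at the leaves. -/
inductive EMBuilt (le : ρ → ρ → Prop) (nmax : ℕ) : CTree (ThC ρ SO) → Prop where
  | gen (c hc oc : ThC ρ SO) : RTh le nmax c hc oc →
      IsTermC nmax hc → IsTermC nmax oc →
      EMBuilt le nmax (CTree.node c (CTree.leaf oc) (CTree.leaf hc))
  | merge {S S' : CTree (ThC ρ SO)} (c : ThC ρ SO) :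
      EMBuilt le nmax S → EMBuilt le nmax S' →
      RTh le nmax c (CTree.rootColor S) (CTree.rootColor S') →
      EMBuilt le nmax (CTree.node c S' S)

end Theta3

section Theta4

variable {ρ SO : Type}

/-- The two children of a vertex carry a matching pair `θ_E^↓` / `θ_E^↑`,
i.e. the vertex is the output of a generator of the form `(c; θ_E^↓, θ_E^↑)`. -/
def ExtShape (l r : CTree (ThC ρ SO)) : Prop :=
  ∃ θE : ρ, Deco [(θE, Mark.down)] (CTree.rootColor l) ∧
    Deco [(θE, Mark.up)] (CTree.rootColor r)

/-- `MPcheck isMax t`: every non-leaf vertex of `t` that is the maximal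
projection of a leaf under the head function (i.e. the root, if `isMax`, and
every internal vertex reached as a non-head child) is the output of a generator
of the form `(c; θ_E^↓, θ_E^↑)`. -/
def MPcheck : Bool → CTree (ThC ρ SO) → Prop
  | _, CTree.leaf _ => True
  | isMax, CTree.node _ l r =>
      (isMax = true → ExtShape l r) ∧ MPcheck true l ∧ MPcheck false r

/-- Local conservation of theta roles at every non-leaf vertex: the head child
carries a tuple of `↑`-marked roles, the other child carries exactly one of
these roles with a `↓` mark, and the vertex carries the tuple of the remaining
`↑`-marked roles. -/
def LocalCons [DecidableEq ρ] : CTree (ThC ρ SO) → Prop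
  | CTree.leaf _ => True
  | CTree.node c l r =>
      (∃ (g : List ρ) (θ : ρ),
        gridOf (CTree.rootColor r) = g.map (fun x => (x, Mark.up)) ∧ θ ∈ g ∧
        gridOf (CTree.rootColor l) = [(θ, Mark.down)] ∧
        gridOf c = (g.erase θ).map (fun x => (x, Mark.up))) ∧
      LocalCons l ∧ LocalCons r

/-- A nonempty grid consisting only of `↑`-marked theta roles. -/
def AllUpNE (g : Grid ρ) : Prop := g ≠ [] ∧ ∀ p ∈ g, p.2 = Mark.up

/-- The part of a theta comb strictly below the root: a spine whose internal
vertices carry partial tuples of `↑`-marked roles, whose non-head leaves carry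
single `↓`-marked roles, and whose head leaf carries a tuple of `↑`-marked
roles. -/
def ThetaCombBelow : CTree (ThC ρ SO) → Prop
  | CTree.leaf c => AllUpNE (gridOf c)
  | CTree.node c l r => AllUpNE (gridOf c) ∧
      (∃ (cl : ThC ρ SO) (θ : ρ), l = CTree.leaf cl ∧ gridOf cl = [(θ, Mark.down)]) ∧
      ThetaCombBelow r

/-- A comb tree whose vertices carry only theta-role colors below the root:
single `↓`-marked roles at the non-head leaves, a tuple of `↑`-marked roles at
the head leaf, and partial `↑`-tuples at the internal vertices. -/
def IsThetaComb : CTree (ThC ρ SO) → Prop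
  | CTree.leaf _ => True
  | CTree.node _ l r =>
      (∃ (cl : ThC ρ SO) (θ : ρ), l = CTree.leaf cl ∧ gridOf cl = [(θ, Mark.down)]) ∧
      ThetaCombBelow r

end Theta4

section ColoredInternalMerge

variable {ρ SO : Type}

theorem not_deco_one (g : Grid ρ) : ¬ Deco g (ThC.one : ThC ρ SO) := by
  rintro (h | ⟨_, h⟩) <;> cases h

theorem not_isInitC_one (nmax : ℕ) : ¬ IsInitC nmax (ThC.one : ThC ρ SO) := by
  rintro ⟨_, h, _⟩
  cases h

theorem RTh12.ne_one {le : ρ → ρ → Prop} {nmax : ℕ} {c hc oc : ThC ρ SO}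
    (h : RTh12 le nmax c hc oc) : hc ≠ ThC.one ∧ oc ≠ ThC.one := by
  cases h with
  | ext _ _ _ _ _ _ dhc doc | internal _ _ _ _ _ _ _ _ dhc doc =>
    exact ⟨fun h => not_deco_one _ (h ▸ dhc), fun h => not_deco_one _ (h ▸ doc)⟩

theorem RTh.eq_theta0_of_one {le : ρ → ρ → Prop} {nmax : ℕ} {c hc oc : ThC ρ SO}
    (h : RTh le nmax c hc oc) (hone : hc = ThC.one ∨ oc = ThC.one) : c = ThC.pos [] := by
  rcases h with h | h
  · exact (hone.elim h.ne_one.1 h.ne_one.2).elim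
  · cases h with
    | adjoin c hinit =>
      rcases hone with rfl | h
      · exact absurd hinit (not_isInitC_one _)
      · cases h
    | im => rfl

theorem CMerge.eq_theta0_of_rootColor_eq_one [DecidableEq ρ] [DecidableEq SO]
    {le : ρ → ρ → Prop} {nmax : ℕ} {c : ThC ρ SO} {S S' : CTree (ThC ρ SO)}
    {F G : Workspace (ThC ρ SO)} (h : CMerge le nmax c S S' F G)
    (hS' : CTree.rootColor S' = ThC.one) : c = ThC.pos [] := by
  obtain ⟨_, _, _, _, ⟨hr, _⟩ | ⟨hr, _⟩⟩ := h
  · exact hr.eq_theta0_of_one (Or.inr hS')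
  · exact hr.eq_theta0_of_one (Or.inl hS')

end ColoredInternalMerge

theorem statement13_general (ρ SO : Type) [DecidableEq ρ] [DecidableEq SO]
    (le : ρ → ρ → Prop) (nmax : ℕ) :
    -- only generators with a (1,θ₀)-colored input have output color θ₀:
    (∀ c hc oc : ThC ρ SO, RTh le nmax c hc oc →
        (hc = ThC.one ∨ oc = ThC.one) → c = ThC.pos []) ∧
    -- hence the first step M^{c₀}_{T_v,(1,θ₀)} of colored Internal Merge forces c₀ = θ₀:
    (∀ (F G₁ : Workspace (ThC ρ SO)) (Tv : CTree (ThC ρ SO)) (c₀ : ThC ρ SO),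
        CMerge le nmax c₀ Tv (CTree.leaf ThC.one) F G₁ → c₀ = ThC.pos []) ∧
    -- so in the composite M^{c'}_{T_v,T/T_v} ∘ M^{θ₀}_{T_v,(1,θ₀)} the root of the
    -- moved copy of T_v in the resulting structure is colored θ₀:
    (∀ (F G₁ G : Workspace (ThC ρ SO)) (T Tv T' S₁ : CTree (ThC ρ SO))
        (c₀ c' : ThC ρ SO),
        T ∈ F → Extract T Tv T' →
        CMerge le nmax c₀ Tv (CTree.leaf ThC.one) F G₁ →
        (S₁ = CTree.node c₀ (CTree.leaf ThC.one) Tv ∨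
          S₁ = CTree.node c₀ Tv (CTree.leaf ThC.one)) →
        CMerge le nmax c' S₁ T' G₁ G →
        CTree.rootColor S₁ = ThC.pos []) := by
  have unit_merge : ∀ (F G₁ : Workspace (ThC ρ SO)) (Tv : CTree (ThC ρ SO)) (c₀ : ThC ρ SO),
      CMerge le nmax c₀ Tv (CTree.leaf ThC.one) F G₁ → c₀ = ThC.pos [] :=
    fun _ _ _ _ h => h.eq_theta0_of_rootColor_eq_one rfl
  refine ⟨fun _ _ _ h => h.eq_theta0_of_one, unit_merge, ?_⟩
  rintro F G₁ G T Tv T' S₁ c₀ c' - - hmerge (rfl | rfl) - <;>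
    exact unit_merge _ _ _ _ hmerge

/-- In the colored Merge formalism for the theta bud system `B_Θ`,
Internal Merge can only move to non-theta positions.  Since the formal unit `1`
carries only the color `(1,θ₀)` and the only generators of `R_Θ` with a
`(1,θ₀)`-colored leaf have output color `θ₀`, colored Internal Merge necessarily
has the form `M^{c'}_{T_v, T/T_v} ∘ M^{θ₀}_{T_v,(1,θ₀)}`, so that in the
resulting structure the root of the moved copy of the accessible term `T_v` is
colored by the non-theta marker `θ₀`. -/
theorem statement13 (ρ SO : Type) [Finite ρ] [Finite SO] [DecidableEq ρ] [DecidableEq SO]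
    (le : ρ → ρ → Prop) (hrefl : ∀ a, le a a)
    (htrans : ∀ a b c, le a b → le b c → le a c) (nmax : ℕ) :
    -- only generators with a (1,θ₀)-colored input have output color θ₀:
    (∀ c hc oc : ThC ρ SO, RTh le nmax c hc oc →
        (hc = ThC.one ∨ oc = ThC.one) → c = ThC.pos []) ∧
    -- hence the first step M^{c₀}_{T_v,(1,θ₀)} of colored Internal Merge forces c₀ = θ₀:
    (∀ (F G₁ : Workspace (ThC ρ SO)) (Tv : CTree (ThC ρ SO)) (c₀ : ThC ρ SO),
        CMerge le nmax c₀ Tv (CTree.leaf ThC.one) F G₁ → c₀ = ThC.pos []) ∧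
    -- so in the composite M^{c'}_{T_v,T/T_v} ∘ M^{θ₀}_{T_v,(1,θ₀)} the root of the
    -- moved copy of T_v in the resulting structure is colored θ₀:
    (∀ (F G₁ G : Workspace (ThC ρ SO)) (T Tv T' S₁ : CTree (ThC ρ SO))
        (c₀ c' : ThC ρ SO),
        T ∈ F → Extract T Tv T' →
        CMerge le nmax c₀ Tv (CTree.leaf ThC.one) F G₁ →
        (S₁ = CTree.node c₀ (CTree.leaf ThC.one) Tv ∨
          S₁ = CTree.node c₀ Tv (CTree.leaf ThC.one)) →
        CMerge le nmax c' S₁ T' G₁ G →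
        CTree.rootColor S₁ = ThC.pos []) :=
  statement13_general ρ SO le nmax
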